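/- arXiv:cs/0612051 — 6 statements merged into one kernel-verified Lean document; each statement's English description precedes it below -/
import Mathlib

section
/- For integers 0 ≤ u ≤ m-1 and integer q ≥ 2, A(m,u) > (q/(q-1)) · K_q · q^{mu}, where A(m,u) = ∏_{i=0}^{u-1}(q^m - q^i) and K_q = ∏_{j=1}^{∞}(1 - q^{-j}). -/
noncomputable def Aq (q m u : ℕ) : ℝ := ∏ i ∈ Finset.range u, ((q:ℝ)^m - (q:ℝ)^i)

noncomputable def Kq (q : ℕ) : ℝ := ∏' j : ℕ, (1 - ((q:ℝ))⁻¹ ^ (j+1))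

noncomputable def gaussBinom (q n t : ℕ) : ℝ := Aq q n t / Aq q t t

/-!
With `r = q⁻¹` one has `A(m,u) = q^{mu} ∏_{i<u} (1 - r^{m-i})`. For `u < m` the exponents `m - i`
together with `1` form a subset of `{1, …, m}`, and all factors `1 - r^k` lie in `[0, 1]`, so
`(1 - r) ∏_{i<u} (1 - r^{m-i})` dominates the partial product `∏_{k=1}^{m} (1 - r^k)`. The partial
products decrease to `K_q`, strictly since every factor is `< 1`.
-/

open Finset

lemma Aq_eq_pow_mul_prod {q m u : ℕ} (hq : q ≠ 0) (hu : u ≤ m) :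
    Aq q m u = (q : ℝ) ^ (m * u) * ∏ i ∈ range u, (1 - (q : ℝ)⁻¹ ^ (m - i)) := by
  have hpow : (q : ℝ) ^ (m * u) = ∏ _i ∈ range u, (q : ℝ) ^ m := by
    rw [prod_const, card_range, pow_mul]
  rw [Aq, hpow, ← prod_mul_distrib]
  refine prod_congr rfl fun i hi => ?_
  have him : i ≤ m := (mem_range.mp hi).le.trans hu
  have hq' : (q : ℝ) ≠ 0 := Nat.cast_ne_zero.mpr hq
  rw [mul_sub, mul_one, inv_pow, ← Nat.sub_add_cancel him, pow_add, Nat.add_sub_cancel,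
    mul_comm ((q : ℝ) ^ (m - i)), mul_assoc, mul_inv_cancel₀ (pow_ne_zero _ hq'), mul_one]

section OneSubPow

variable {r : ℝ}

lemma multipliable_one_sub_pow_succ (h0 : 0 ≤ r) (h1 : r < 1) :
    Multipliable fun j : ℕ => 1 - r ^ (j + 1) := by
  simp_rw [sub_eq_add_neg]
  refine Real.multipliable_one_add_of_summable (Summable.neg ?_)
  simpa only [pow_succ'] using (summable_geometric_of_lt_one h0 h1).mul_left r

lemma antitone_prod_range_one_sub_pow_succ (h0 : 0 ≤ r) (h1 : r ≤ 1) :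
    Antitone fun n => ∏ j ∈ range n, (1 - r ^ (j + 1)) :=
  (prod_anti_set_of_le_one (fun _ => sub_nonneg.mpr (pow_le_one₀ h0 h1))
    (fun _ => sub_le_self _ (pow_nonneg h0 _))).comp_monotone fun _ _ h => range_subset_range.mpr h

lemma tprod_one_sub_pow_succ_lt_prod_range (h0 : 0 < r) (h1 : r < 1) (n : ℕ) :
    ∏' j : ℕ, (1 - r ^ (j + 1)) < ∏ j ∈ range n, (1 - r ^ (j + 1)) := by
  have hpos : 0 < ∏ j ∈ range n, (1 - r ^ (j + 1)) :=
    prod_pos fun j _ => sub_pos.mpr (pow_lt_one₀ h0.le h1 (by omega))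
  calc ∏' j : ℕ, (1 - r ^ (j + 1))
      ≤ ∏ j ∈ range (n + 1), (1 - r ^ (j + 1)) :=
        (antitone_prod_range_one_sub_pow_succ h0.le h1.le).le_of_tendsto
          (multipliable_one_sub_pow_succ h0.le h1).tendsto_prod_tprod_nat _
    _ = (∏ j ∈ range n, (1 - r ^ (j + 1))) * (1 - r ^ (n + 1)) := prod_range_succ _ _
    _ < ∏ j ∈ range n, (1 - r ^ (j + 1)) :=
        mul_lt_of_lt_one_right hpos (sub_lt_self _ (pow_pos h0 _))

lemma prod_range_one_sub_pow_succ_le {m u : ℕ} (h0 : 0 ≤ r) (h1 : r ≤ 1) (hum : u < m) :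
    ∏ j ∈ range m, (1 - r ^ (j + 1)) ≤ (1 - r) * ∏ i ∈ range u, (1 - r ^ (m - i)) := by
  have hreflect :
      ∏ i ∈ range u, (1 - r ^ (m - i)) = ∏ j ∈ Ico (m - u) m, (1 - r ^ (j + 1)) := by
    obtain ⟨n, rfl⟩ : ∃ n, m = n + 1 := ⟨m - 1, by omega⟩
    have h := prod_Ico_reflect (fun j => 1 - r ^ (j + 1)) 0 (m := u) (n := n) (by omega)
    rw [Nat.sub_zero, Nat.Ico_zero_eq_range] at h
    rw [← h]
    refine prod_congr rfl fun i hi => ?_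
    rw [show n - i + 1 = n + 1 - i by have := mem_range.mp hi; omega]
  have h0_notMem : 0 ∉ Ico (m - u) m := by simp only [mem_Ico]; omega
  have hinsert : (1 - r) * ∏ j ∈ Ico (m - u) m, (1 - r ^ (j + 1))
      = ∏ j ∈ insert 0 (Ico (m - u) m), (1 - r ^ (j + 1)) := by
    rw [prod_insert h0_notMem, zero_add, pow_one]
  rw [hreflect, hinsert]
  refine prod_le_prod_of_subset_of_le_one (fun j hj => ?_)
    (fun _ _ => sub_nonneg.mpr (pow_le_one₀ h0 h1)) (fun _ _ _ => sub_le_self _ (pow_nonneg h0 _))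
  simp only [mem_insert, mem_Ico] at hj
  simp only [mem_range]
  omega

end OneSubPow

/-- For `0 ≤ u ≤ m-1` and `q ≥ 2`, `A(m,u) > (q/(q-1)) · K_q · q^{mu}`. -/
theorem stmt1 (q m u : ℕ) (hq : 2 ≤ q) (hum : u ≤ m - 1) (hm : 1 ≤ m) :
    ((q:ℝ) / ((q:ℝ) - 1)) * Kq q * (q:ℝ) ^ (m * u) < Aq q m u := by
  have hq' : (1 : ℝ) < q := by exact_mod_cast hq
  have hr0 : 0 < (q : ℝ)⁻¹ := by positivity
  have hr1 : (q : ℝ)⁻¹ < 1 := inv_lt_one_of_one_lt₀ hq'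
  have hfrac : (q : ℝ) / (q - 1) = (1 - (q : ℝ)⁻¹)⁻¹ := by
    field_simp
  have hK : Kq q < (1 - (q : ℝ)⁻¹) * ∏ i ∈ range u, (1 - (q : ℝ)⁻¹ ^ (m - i)) :=
    (tprod_one_sub_pow_succ_lt_prod_range hr0 hr1 m).trans_le
      (prod_range_one_sub_pow_succ_le hr0.le hr1.le (by omega))
  rw [Aq_eq_pow_mul_prod (by omega) (by omega), hfrac, mul_comm _ ((q : ℝ) ^ (m * u))]
  exact mul_lt_mul_of_pos_left ((inv_mul_lt_iff₀ (sub_pos.mpr hr1)).mpr hK) (by positivity)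
end

section
/- The quantity D(m,u) = q^{mu}/A(m,u) is non-decreasing in u for 0 ≤ u ≤ m, and for even m = 2p with p ≥ 1, D(2p,p) is a non-increasing function of p, with maximum D(2,1) = q²/(q²-1). -/
noncomputable def Dq (q m u : ℕ) : ℝ := (q:ℝ) ^ (m * u) / Aq q m u

/-!
Dividing each factor `q^m - q^i` of `A(m,u)` by `q^m` gives
`D(m,u) = ∏_{i<u} (1 - q^{-(m-i)})⁻¹`, a product of factors `≥ 1`, so `D(m,u)` grows with `u`.
For `m = 2p` the exponents are `p+1, …, 2p`; passing from `p` to `p+1` drops the factor with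
exponent `p+1` and adds those with exponents `2p+1` and `2p+2`. With `x = q⁻¹ ≤ 1/2`,
`a = x^{p+1}` and `b = x^p` we have `a + b ≤ 1`, and then `1 - a ≤ (1 - ab)(1 - a²)`:
the factor lost outweighs the two gained.
-/

lemma Aq_succ (q m u : ℕ) : Aq q m (u + 1) = Aq q m u * ((q:ℝ)^m - (q:ℝ)^u) :=
  Finset.prod_range_succ _ _

lemma Aq_pos {q m u : ℕ} (hq : 1 < q) (hu : u ≤ m) : 0 < Aq q m u :=
  Finset.prod_pos fun i hi ↦ sub_pos.2 <|
    pow_lt_pow_right₀ (by exact_mod_cast hq) ((Finset.mem_range.1 hi).trans_le hu)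

lemma Dq_pos {q m u : ℕ} (hq : 1 < q) (hu : u ≤ m) : 0 < Dq q m u :=
  div_pos (by positivity) (Aq_pos hq hu)

lemma Dq_le_Dq_succ {q m u : ℕ} (hq : 1 < q) (hu : u < m) : Dq q m u ≤ Dq q m (u + 1) := by
  have hqm : (q:ℝ)^u < (q:ℝ)^m := pow_lt_pow_right₀ (by exact_mod_cast hq) hu
  have hfactor : 1 ≤ (q:ℝ)^m / ((q:ℝ)^m - (q:ℝ)^u) :=
    (one_le_div (sub_pos.2 hqm)).2 (sub_le_self _ (by positivity))
  calc Dq q m u ≤ Dq q m u * ((q:ℝ)^m / ((q:ℝ)^m - (q:ℝ)^u)) :=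
        le_mul_of_one_le_right (Dq_pos hq hu.le).le hfactor
    _ = Dq q m (u + 1) := by
        rw [Dq, Dq, Aq_succ, Nat.mul_succ, pow_add, mul_div_mul_comm]

lemma Dq_mono {q m u u' : ℕ} (hq : 1 < q) (hu : u ≤ u') (hu' : u' ≤ m) :
    Dq q m u ≤ Dq q m u' := by
  induction u', hu using Nat.le_induction with
  | base => rfl
  | succ k _ ih => exact (ih (by omega)).trans (Dq_le_Dq_succ hq (by omega))

lemma Dq_eq_prod {q m u : ℕ} (hq : q ≠ 0) (hu : u ≤ m) :
    Dq q m u = ∏ i ∈ Finset.range u, (1 - (q:ℝ)⁻¹ ^ (m - i))⁻¹ := by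
  rw [Dq, Aq, pow_mul, ← Finset.card_range u, ← Finset.prod_const, Finset.card_range,
    ← Finset.prod_div_distrib]
  refine Finset.prod_congr rfl fun i hi ↦ ?_
  have hm : (q:ℝ)^m = (q:ℝ)^(m - i) * (q:ℝ)^i := by
    rw [← pow_add, Nat.sub_add_cancel ((Finset.mem_range.1 hi).le.trans hu)]
  have hq' : (q:ℝ) ≠ 0 := by exact_mod_cast hq
  rw [hm, inv_pow, ← sub_one_mul, mul_div_mul_right _ _ (pow_ne_zero _ hq'),
    show 1 - ((q:ℝ)^(m - i))⁻¹ = ((q:ℝ)^(m - i) - 1) / (q:ℝ)^(m - i) by field_simp, inv_div]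

lemma Dq_two_mul_self {q : ℕ} (hq : q ≠ 0) (p : ℕ) :
    Dq q (2 * p) p = ∏ i ∈ Finset.range p, (1 - (q:ℝ)⁻¹ ^ (p + 1 + i))⁻¹ := by
  rw [Dq_eq_prod hq (by omega), ← Finset.prod_range_reflect]
  refine Finset.prod_congr rfl fun i hi ↦ ?_
  rw [Finset.mem_range] at hi
  rw [show 2 * p - (p - 1 - i) = p + 1 + i by omega]

lemma inv_one_sub_pow_mul_Dq_two_mul_succ {q : ℕ} (hq : q ≠ 0) (p : ℕ) :
    (1 - (q:ℝ)⁻¹ ^ (p + 1))⁻¹ * Dq q (2 * (p + 1)) (p + 1) =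
      Dq q (2 * p) p * ((1 - (q:ℝ)⁻¹ ^ (2 * p + 1))⁻¹ * (1 - (q:ℝ)⁻¹ ^ (2 * p + 2))⁻¹) := by
  rw [Dq_two_mul_self hq, Dq_two_mul_self hq]
  calc _ = ∏ i ∈ Finset.range (p + 1 + 1), (1 - (q:ℝ)⁻¹ ^ (p + 1 + i))⁻¹ := by
        rw [Finset.prod_range_succ' _ (p + 1)]; ring_nf
    _ = _ := by rw [Finset.prod_range_succ, Finset.prod_range_succ]; ring_nf

lemma one_sub_le_one_sub_mul_mul_one_sub_sq {a b : ℝ} (ha : 0 ≤ a) (hb : 0 ≤ b)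
    (hab : a + b ≤ 1) : 1 - a ≤ (1 - a * b) * (1 - a ^ 2) := by
  nlinarith [mul_nonneg (mul_nonneg ha ha) (mul_nonneg ha hb)]

lemma Dq_two_mul_succ_le {q p : ℕ} (hq : 2 ≤ q) (hp : 1 ≤ p) :
    Dq q (2 * (p + 1)) (p + 1) ≤ Dq q (2 * p) p := by
  set x : ℝ := (q:ℝ)⁻¹ with hx_def
  have hx0 : 0 ≤ x := by positivity
  have hx : x ≤ 1 / 2 := by
    rw [hx_def, one_div]; exact inv_anti₀ two_pos (by exact_mod_cast hq)
  have hb : x ^ p ≤ 1 / 2 := (pow_le_of_le_one hx0 (by linarith) (by omega)).trans hx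
  have ha : x ^ (p + 1) ≤ x ^ p := pow_le_pow_of_le_one hx0 (by linarith) (by omega)
  have hlost : 0 < 1 - x ^ (p + 1) := by linarith
  have hkey : 1 - x ^ (p + 1) ≤ (1 - x ^ (2 * p + 1)) * (1 - x ^ (2 * p + 2)) := by
    convert one_sub_le_one_sub_mul_mul_one_sub_sq (pow_nonneg hx0 (p + 1)) (pow_nonneg hx0 p)
      (by linarith) using 3 <;> ring
  have hgained : (1 - x ^ (2 * p + 1))⁻¹ * (1 - x ^ (2 * p + 2))⁻¹ ≤ (1 - x ^ (p + 1))⁻¹ := by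
    rw [← mul_inv]; exact inv_anti₀ hlost hkey
  refine le_of_mul_le_mul_left ?_ (inv_pos.2 hlost)
  rw [inv_one_sub_pow_mul_Dq_two_mul_succ (by omega), mul_comm _ (Dq q (2 * p) p)]
  exact mul_le_mul_of_nonneg_left hgained (Dq_pos (by omega) (by omega)).le

/-- `D(m,u) = q^{mu}/A(m,u)` is non-decreasing in `u` for `0 ≤ u ≤ m`; for even
`m = 2p` with `p ≥ 1`, `D(2p,p)` is non-increasing in `p`, with maximum
`D(2,1) = q²/(q²-1)`. -/
theorem stmt3 (q : ℕ) (hq : 2 ≤ q) :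
    (∀ m u u', u ≤ u' → u' ≤ m → Dq q m u ≤ Dq q m u') ∧
    (∀ p, 1 ≤ p → Dq q (2 * (p + 1)) (p + 1) ≤ Dq q (2 * p) p) ∧
    (∀ p, 1 ≤ p → Dq q (2 * p) p ≤ Dq q 2 1) ∧
    Dq q 2 1 = (q:ℝ)^2 / ((q:ℝ)^2 - 1) := by
  have hanti : AntitoneOn (fun p ↦ Dq q (2 * p) p) {p | 1 ≤ p} :=
    antitoneOn_nat_Ici_of_succ_le fun p hp ↦ Dq_two_mul_succ_le hq hp
  refine ⟨fun m u u' ↦ Dq_mono (by omega), fun p ↦ Dq_two_mul_succ_le hq,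
    fun p hp ↦ hanti (le_refl 1) hp hp, ?_⟩
  simp [Dq, Aq]
end

section
/- Let V be an elementary linear subspace of GF(q^m)^n of dimension v. Then every vector in V has rank at most v; moreover, if v ≤ m then V contains a vector of rank exactly v, so the rank diameter δ(V) = max_{x ∈ V} rk(x) equals v. -/
noncomputable def rk (Fq : Type*) {F : Type*} [Field Fq] [Field F] [Algebra Fq F] {n : ℕ} (x : Fin n → F) : ℕ :=
  Module.finrank Fq (Submodule.span Fq (Set.range x))

def IsElementary (Fq : Type*) {F : Type*} [Field Fq] [Field F] [Algebra Fq F] {n : ℕ} (V : Submodule F (Fin n → F)) : Prop :=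
  ∃ b : Module.Basis (Fin (Module.finrank F V)) F V,
    ∀ i j, ((b i : Fin n → F) j) ∈ Set.range (algebraMap Fq F)

/-! An elementary subspace of dimension `v` is the set of vectors `x` with `x j = ∑ i, A i j • c i`,
where `A` is a `v × n` matrix over `Fq` with linearly independent rows and `c ∈ F^v` is arbitrary.
The coordinates of such an `x` are `Fq`-combinations of `c 0, …, c (v - 1)`, so `rk x ≤ v`.
Conversely the columns of `A` span `Fq^v`, so the coordinates of `x` span the same `Fq`-space as the
`c i`; taking the `c i` linearly independent over `Fq`, which is possible when `v ≤ [F : Fq]`,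
gives `rk x = v`. -/

open Module Submodule

theorem Matrix.span_range_col_eq_top_of_linearIndependent {K ι κ : Type*} [Field K] [Fintype ι]
    [Fintype κ] {A : Matrix ι κ K} (hA : LinearIndependent K A.row) :
    span K (Set.range A.col) = ⊤ := by
  apply eq_top_of_finrank_eq
  rw [← Matrix.rank_eq_finrank_span_cols, hA.rank_matrix, finrank_fintype_fun_eq_card]

section LinearCombination

variable {K M ι κ : Type*} [AddCommMonoid M] [Fintype ι]

theorem span_range_sum_smul_eq_map [Semiring K] [Module K M] (A : Matrix ι κ K) (c : ι → M) :
    span K (Set.range fun j => ∑ i, A i j • c i) =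
      (span K (Set.range A.col)).map (Fintype.linearCombination K c) := by
  rw [map_span, ← Set.range_comp]
  rfl

theorem span_range_sum_smul_le [Semiring K] [Module K M] (A : Matrix ι κ K) (c : ι → M) :
    span K (Set.range fun j => ∑ i, A i j • c i) ≤ span K (Set.range c) := by
  rw [span_range_sum_smul_eq_map, ← Fintype.range_linearCombination K c]
  exact LinearMap.map_le_range

theorem span_range_sum_smul_eq_of_linearIndependent [Field K] [Module K M] [Fintype κ]
    {A : Matrix ι κ K} (hA : LinearIndependent K A.row) (c : ι → M) :
    span K (Set.range fun j => ∑ i, A i j • c i) = span K (Set.range c) := by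
  rw [span_range_sum_smul_eq_map, A.span_range_col_eq_top_of_linearIndependent hA,
    Submodule.map_top, Fintype.range_linearCombination]

end LinearCombination

section Elementary

variable {Fq F : Type*} [Field Fq] [Field F] [Algebra Fq F] {n : ℕ}

theorem IsElementary.exists_linearIndependent_coeffs {V : Submodule F (Fin n → F)}
    (hV : IsElementary Fq V) :
    ∃ A : Matrix (Fin (finrank F V)) (Fin n) Fq, LinearIndependent Fq A.row ∧
      ∀ x, x ∈ V ↔ ∃ c : Fin (finrank F V) → F, x = fun j => ∑ i, A i j • c i := by
  obtain ⟨b, hb⟩ := hV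
  choose A hA using hb
  have hsum (c : Fin (finrank F V) → F) :
      ((∑ i, c i • b i : V) : Fin n → F) = fun j => ∑ i, A i j • c i := by
    ext j
    rw [coe_sum, Finset.sum_apply]
    refine Finset.sum_congr rfl fun i _ => ?_
    rw [coe_smul, Pi.smul_apply, smul_eq_mul, ← hA, Algebra.smul_def, mul_comm]
  refine ⟨Matrix.of A, ?_, fun x => ⟨fun hx => ⟨fun i => b.repr ⟨x, hx⟩ i, ?_⟩, ?_⟩⟩
  · have hb : LinearIndependent F fun i => (b i : Fin n → F) :=
      b.linearIndependent.map' V.subtype V.ker_subtype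
    have hbA : (fun i => (b i : Fin n → F)) =
        LinearMap.compLeft (Algebra.linearMap Fq F) (Fin n) ∘ (Matrix.of A).row := by
      ext i j
      exact (hA i j).symm
    rw [hbA] at hb
    exact (hb.restrict_scalars' Fq).of_comp
  · exact (congrArg Subtype.val (b.sum_repr ⟨x, hx⟩)).symm.trans (hsum _)
  · rintro ⟨c, rfl⟩
    exact hsum c ▸ Subtype.property _

theorem rk_sum_smul_le {ι : Type*} [Fintype ι] (A : Matrix ι (Fin n) Fq) (c : ι → F) :
    rk Fq (fun j => ∑ i, A i j • c i) ≤ Fintype.card ι :=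
  have := Module.Finite.span_of_finite Fq (Set.finite_range c)
  (Submodule.finrank_mono (span_range_sum_smul_le A c)).trans (finrank_range_le_card c)

theorem rk_sum_smul_eq {ι : Type*} [Fintype ι] {A : Matrix ι (Fin n) Fq}
    (hA : LinearIndependent Fq A.row) {c : ι → F} (hc : LinearIndependent Fq c) :
    rk Fq (fun j => ∑ i, A i j • c i) = Fintype.card ι := by
  rw [rk, span_range_sum_smul_eq_of_linearIndependent hA, finrank_span_eq_card hc]

end Elementary

theorem stmt8_general (m n v : ℕ) (Fq F : Type) [Field Fq] [Field F] [Algebra Fq F]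
    (hm : Module.finrank Fq F = m)
    (V : Submodule F (Fin n → F)) (hV : IsElementary Fq V) (hv : Module.finrank F V = v) :
    (∀ x ∈ V, rk Fq x ≤ v) ∧ (v ≤ m → ∃ x ∈ V, rk Fq x = v) := by
  subst hv hm
  obtain ⟨A, hA, hmem⟩ := hV.exists_linearIndependent_coeffs
  refine ⟨fun x hx => ?_, fun hvm => ?_⟩
  · obtain ⟨c, rfl⟩ := (hmem x).1 hx
    simpa using rk_sum_smul_le A c
  · obtain ⟨c, hc⟩ := exists_linearIndependent_of_le_finrank hvm
    exact ⟨_, (hmem _).2 ⟨c, rfl⟩, by simpa using rk_sum_smul_eq hA hc⟩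

/-- Every vector of an elementary linear subspace of dimension `v` has rank at most `v`;
if `v ≤ m`, the subspace contains a vector of rank exactly `v`, so its rank diameter is `v`. -/
theorem stmt8 (q m n v : ℕ) (Fq F : Type) [Field Fq] [Fintype Fq] [Field F] [Algebra Fq F]
    (hq : Fintype.card Fq = q) (hm : Module.finrank Fq F = m)
    (V : Submodule F (Fin n → F)) (hV : IsElementary Fq V) (hv : Module.finrank F V = v) :
    (∀ x ∈ V, rk Fq x ≤ v) ∧ (v ≤ m → ∃ x ∈ V, rk Fq x = v) :=
  stmt8_general m n v Fq F hm V hV hv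
end

section
/- A vector x ∈ GF(q^m)^n has rank at most u if and only if x belongs to some elementary linear subspace of GF(q^m)^n of dimension u. -/
open Module Submodule Set

theorem Submodule.exists_le_finrank_eq {K V : Type*} [DivisionRing K] [AddCommGroup V]
    [Module K V] [FiniteDimensional K V] (N : Submodule K V) {k : ℕ}
    (hNk : finrank K N ≤ k) (hk : k ≤ finrank K V) :
    ∃ N' : Submodule K V, N ≤ N' ∧ finrank K N' = k := by
  induction k, hNk using Nat.le_induction with
  | base => exact ⟨N, le_rfl, rfl⟩
  | succ k _ ih =>
    obtain ⟨N', hNN', hN'⟩ := ih (by omega)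
    obtain ⟨v, hv⟩ : ∃ v, v ∉ N' := by
      by_contra! h
      rw [Submodule.eq_top_iff'.2 h, finrank_top] at hN'
      omega
    exact ⟨N' ⊔ span K {v}, hNN'.trans le_sup_left, by rw [finrank_sup_span_singleton hv, hN']⟩

theorem Module.Basis.span_range_subtype {R M ι : Type*} [Semiring R] [AddCommMonoid M]
    [Module R M] {N : Submodule R M} (b : Basis ι R N) :
    span R (range (N.subtype ∘ b)) = N := by
  rw [range_comp, ← map_span, b.span_eq, Submodule.map_top, range_subtype]

theorem Submodule.span_image_span {R S M N : Type*} [CommSemiring R] [Semiring S] [Algebra R S]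
    [AddCommMonoid M] [Module R M] [AddCommMonoid N] [Module R N] [Module S N]
    [IsScalarTower R S N] (f : M →ₗ[R] N) (s : Set M) :
    span S (f '' span R s) = span S (f '' s) := by
  rw [← map_coe, map_span, span_span_of_tower]

variable {Fq F : Type*} [Field Fq] [Field F] [Algebra Fq F] {n : ℕ}

variable (F) in
def elementarySpan (U : Submodule Fq (Fin n → Fq)) : Submodule F (Fin n → F) :=
  span F (Pi.algebraMap (Fin n) Fq F '' U)

theorem elementarySpan_span_range {ι : Type*} (w : ι → Fin n → Fq) :
    elementarySpan F (span Fq (range w)) = span F (range (Pi.algebraMap (Fin n) Fq F ∘ w)) := by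
  rw [elementarySpan, span_image_span, range_comp]

theorem sum_smul_piAlgebraMap_apply {ι : Type*} [Fintype ι] (c : ι → F) (w : ι → Fin n → Fq)
    (j : Fin n) : (∑ i, c i • Pi.algebraMap (Fin n) Fq F (w i)) j = ∑ i, w i j • c i := by
  simp only [Finset.sum_apply, Pi.smul_apply]
  refine Finset.sum_congr rfl fun i _ => ?_
  rw [smul_eq_mul, Algebra.smul_def, mul_comm]
  rfl

theorem rk_le_card_of_mem_span {ι : Type*} [Fintype ι] {w : ι → Fin n → Fq} {x : Fin n → F}
    (hx : x ∈ span F (range (Pi.algebraMap (Fin n) Fq F ∘ w))) :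
    rk Fq x ≤ Fintype.card ι := by
  obtain ⟨c, rfl⟩ := (mem_span_range_iff_exists_fun F).1 hx
  have hle : span Fq (range (∑ i, c i • Pi.algebraMap (Fin n) Fq F (w i))) ≤ span Fq (range c) := by
    rw [span_le]
    rintro - ⟨j, rfl⟩
    rw [sum_smul_piAlgebraMap_apply]
    exact sum_mem fun i _ => smul_mem _ _ (subset_span (mem_range_self i))
  have : FiniteDimensional Fq (span Fq (range c)) := .span_of_finite Fq (finite_range c)
  exact (Submodule.finrank_mono hle).trans (finrank_range_le_card c)

theorem exists_mem_span_fin_rk (x : Fin n → F) :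
    ∃ v : Fin (rk Fq x) → Fin n → Fq, x ∈ span F (range (Pi.algebraMap (Fin n) Fq F ∘ v)) := by
  set S := span Fq (range x)
  have : FiniteDimensional Fq S := .span_of_finite Fq (finite_range x)
  let e : Basis (Fin (rk Fq x)) Fq S := finBasis Fq S
  have hxS (j : Fin n) : x j ∈ S := subset_span (mem_range_self j)
  refine ⟨fun i j => e.repr ⟨x j, hxS j⟩ i, (mem_span_range_iff_exists_fun F).2 ⟨fun i => e i, ?_⟩⟩
  funext j
  simp only [Function.comp_apply]
  rw [sum_smul_piAlgebraMap_apply]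
  have hj : ((∑ i, e.repr ⟨x j, hxS j⟩ i • e i : S) : F) = x j :=
    congrArg Subtype.val (e.sum_repr _)
  simpa only [coe_sum, coe_smul] using hj

theorem rk_le_iff_exists_mem_elementarySpan (x : Fin n → F) (k : ℕ) :
    rk Fq x ≤ k ↔ ∃ U : Submodule Fq (Fin n → Fq), finrank Fq U ≤ k ∧ x ∈ elementarySpan F U := by
  constructor
  · intro hk
    obtain ⟨v, hv⟩ := exists_mem_span_fin_rk (Fq := Fq) x
    refine ⟨span Fq (range v), ?_, by rwa [elementarySpan_span_range]⟩
    exact (finrank_range_le_card v).trans (by simpa using hk)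
  · rintro ⟨U, hU, hx⟩
    let b := finBasis Fq U
    rw [← b.span_range_subtype, elementarySpan_span_range] at hx
    exact (rk_le_card_of_mem_span hx).trans (by simpa using hU)

theorem LinearIndependent.piAlgebraMap_comp {ι : Type*} {w : ι → Fin n → Fq}
    (hw : LinearIndependent Fq w) : LinearIndependent F (Pi.algebraMap (Fin n) Fq F ∘ w) :=
  linearIndependent_algebraMap_comp_iff.2 hw

theorem isElementary_span_range {ι : Type*} [Fintype ι] {w : ι → Fin n → Fq}
    (hw : LinearIndependent Fq w) :
    IsElementary Fq (span F (range (Pi.algebraMap (Fin n) Fq F ∘ w))) := by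
  have hcard := finrank_span_eq_card (hw.piAlgebraMap_comp (F := F))
  refine ⟨(Basis.span hw.piAlgebraMap_comp).reindex (Fintype.equivFinOfCardEq hcard.symm),
    fun i j => ?_⟩
  rw [Basis.reindex_apply, Basis.span_apply]
  exact mem_range_self _

theorem finrank_elementarySpan (U : Submodule Fq (Fin n → Fq)) :
    finrank F (elementarySpan F U) = finrank Fq U := by
  let b := finBasis Fq U
  have hb : LinearIndependent Fq (U.subtype ∘ b) := b.linearIndependent.map' _ (ker_subtype U)
  calc finrank F (elementarySpan F U)
      = finrank F (span F (range (Pi.algebraMap (Fin n) Fq F ∘ U.subtype ∘ b))) := by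
        rw [← elementarySpan_span_range, b.span_range_subtype]
    _ = finrank Fq U := by rw [finrank_span_eq_card hb.piAlgebraMap_comp, Fintype.card_fin]

theorem isElementary_elementarySpan (U : Submodule Fq (Fin n → Fq)) :
    IsElementary Fq (elementarySpan F U) := by
  let b := finBasis Fq U
  rw [← b.span_range_subtype, elementarySpan_span_range]
  exact isElementary_span_range (b.linearIndependent.map' _ (ker_subtype U))

theorem IsElementary.exists_eq_elementarySpan {V : Submodule F (Fin n → F)}
    (hV : IsElementary Fq V) : ∃ U : Submodule Fq (Fin n → Fq), elementarySpan F U = V := by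
  obtain ⟨b, hb⟩ := hV
  choose w hw using hb
  refine ⟨span Fq (range w), ?_⟩
  rw [elementarySpan_span_range]
  convert b.span_range_subtype using 3
  funext i j
  exact hw i j

theorem stmt9_general (n u : ℕ) (Fq F : Type) [Field Fq] [Field F] [Algebra Fq F]
    (hu : u ≤ n)
    (x : Fin n → F) :
    rk Fq x ≤ u ↔
      ∃ V : Submodule F (Fin n → F),
        IsElementary Fq V ∧ Module.finrank F V = u ∧ x ∈ V := by
  constructor
  · intro hx
    obtain ⟨U, hUu, hxU⟩ := (rk_le_iff_exists_mem_elementarySpan x u).1 hx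
    obtain ⟨U', hUU', hU'⟩ := U.exists_le_finrank_eq hUu (by simpa using hu)
    exact ⟨elementarySpan F U', isElementary_elementarySpan U',
      (finrank_elementarySpan U').trans hU', span_mono (image_mono hUU') hxU⟩
  · rintro ⟨V, hV, rfl, hxV⟩
    obtain ⟨U, rfl⟩ := hV.exists_eq_elementarySpan
    exact (rk_le_iff_exists_mem_elementarySpan x _).2 ⟨U, (finrank_elementarySpan U).ge, hxV⟩

/-- `x ∈ GF(q^m)^n` has rank at most `u` iff it belongs to some elementary linear
subspace of dimension `u`. -/
theorem stmt9 (q m n u : ℕ) (Fq F : Type) [Field Fq] [Fintype Fq] [Field F] [Algebra Fq F]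
    (hq : Fintype.card Fq = q) (hm : Module.finrank Fq F = m) (hu : u ≤ n)
    (x : Fin n → F) :
    rk Fq x ≤ u ↔
      ∃ V : Submodule F (Fin n → F),
        IsElementary Fq V ∧ Module.finrank F V = u ∧ x ∈ V :=
  stmt9_general n u Fq F hu x
end

section
/- Let V and V' be complementary subspaces of GF(q^m)^n and let x ∈ GF(q^m)^n with projections x_V and x_{V'}. Then rk(x_V) ≤ rk(x) and rk(x) ≤ rk(x_V) + rk(x_{V'}), where the first inequality holds when V and V' are elementary linear subspaces. -/
/-!
For `rk(x_V) ≤ rk(x)`, let `S` be the `Fq`-span of the coordinates of `x`. Applying an `Fq`-linear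
map `g : F → F` coordinatewise preserves every elementary subspace, since such a subspace is spanned
by vectors with coordinates in `Fq`. If `g` vanishes on `S`, it kills `x`, so `g ∘ x_V = -(g ∘ x_{V'})`
lies in `V ⊓ V' = ⊥`. Hence every linear form vanishing on `S` vanishes on the coordinates of `x_V`,
and these coordinates lie in `S`.
-/

open Submodule

variable {Fq F : Type*} [Field Fq] [Field F] [Algebra Fq F] {n : ℕ}

theorem rk_le_rk_of_span_le {x y : Fin n → F}
    (h : span Fq (Set.range x) ≤ span Fq (Set.range y)) : rk Fq x ≤ rk Fq y := by
  have := FiniteDimensional.span_of_finite Fq (Set.finite_range y)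
  exact finrank_mono h

theorem rk_add_le (x y : Fin n → F) : rk Fq (x + y) ≤ rk Fq x + rk Fq y := by
  have := FiniteDimensional.span_of_finite Fq (Set.finite_range x)
  have := FiniteDimensional.span_of_finite Fq (Set.finite_range y)
  have hle : span Fq (Set.range (x + y)) ≤ span Fq (Set.range x) ⊔ span Fq (Set.range y) := by
    rw [span_le]
    rintro _ ⟨j, rfl⟩
    exact add_mem_sup (subset_span ⟨j, rfl⟩) (subset_span ⟨j, rfl⟩)
  exact (finrank_mono hle).trans (finrank_add_le_finrank_add_finrank _ _)

theorem IsElementary.comp_mem {V : Submodule F (Fin n → F)} (hV : IsElementary Fq V)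
    (g : F →ₗ[Fq] F) {y : Fin n → F} (hy : y ∈ V) : g ∘ y ∈ V := by
  obtain ⟨b, hb⟩ := hV
  choose a ha using hb
  set c := b.repr ⟨y, hy⟩
  have hy_eq : y = ∑ i, c i • (b i : Fin n → F) := by
    have h := congrArg Subtype.val (b.sum_repr ⟨y, hy⟩)
    rw [coe_sum] at h
    exact h.symm
  have hg_eq : g ∘ y = ∑ i, g (c i) • (b i : Fin n → F) := by
    funext j
    simp only [hy_eq, Function.comp_apply, Finset.sum_apply, Pi.smul_apply, smul_eq_mul, map_sum,
      ← ha, ← Algebra.commutes, ← Algebra.smul_def, map_smul]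
  rw [hg_eq]
  exact sum_mem fun i _ => V.smul_mem _ (b i).2

theorem IsElementary.coord_mem_span_of_add {V V' : Submodule F (Fin n → F)}
    (hV : IsElementary Fq V) (hV' : IsElementary Fq V') (hdisj : Disjoint V V')
    {xV xV' : Fin n → F} (hxV : xV ∈ V) (hxV' : xV' ∈ V') (j : Fin n) :
    xV j ∈ span Fq (Set.range (xV + xV')) := by
  rw [← Subspace.dualAnnihilator_dualCoannihilator_eq (W := span Fq (Set.range (xV + xV'))),
    mem_dualCoannihilator]
  intro φ hφ
  rw [mem_dualAnnihilator] at hφ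
  set g := Algebra.linearMap Fq F ∘ₗ φ
  have hg_sum : g ∘ xV + g ∘ xV' = 0 := by
    funext k
    have h := hφ _ (subset_span ⟨k, rfl⟩)
    rw [Pi.add_apply] at h
    rw [Pi.add_apply, Function.comp_apply, Function.comp_apply, ← map_add]
    simp [g, h]
  have hg_xV : g ∘ xV = 0 := (disjoint_def.mp hdisj) _ (hV.comp_mem g hxV) <| by
    rw [eq_neg_of_add_eq_zero_left hg_sum]
    exact neg_mem (hV'.comp_mem g hxV')
  simpa [g] using congrFun hg_xV j

theorem stmt12_general (n : ℕ) (Fq F : Type) [Field Fq] [Field F] [Algebra Fq F]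
    (V V' : Submodule F (Fin n → F)) (hcompl : IsCompl V V')
    (x xV xV' : Fin n → F) (hxV : xV ∈ V) (hxV' : xV' ∈ V') (hx : x = xV + xV') :
    rk Fq x ≤ rk Fq xV + rk Fq xV' ∧
    (IsElementary Fq V → IsElementary Fq V' → rk Fq xV ≤ rk Fq x) := by
  subst hx
  refine ⟨rk_add_le xV xV', fun hV hV' => rk_le_rk_of_span_le ?_⟩
  rw [span_le]
  rintro _ ⟨j, rfl⟩
  exact hV.coord_mem_span_of_add hV' hcompl.disjoint hxV hxV' j

/-- For complementary subspaces `V ⊕ V' = GF(q^m)^n` and `x = x_V + x_{V'}`: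
`rk(x) ≤ rk(x_V) + rk(x_{V'})`, and if `V` and `V'` are elementary then
`rk(x_V) ≤ rk(x)`. -/
theorem stmt12 (q m n : ℕ) (Fq F : Type) [Field Fq] [Fintype Fq] [Field F] [Algebra Fq F]
    (hq : Fintype.card Fq = q) (hm : Module.finrank Fq F = m)
    (V V' : Submodule F (Fin n → F)) (hcompl : IsCompl V V')
    (x xV xV' : Fin n → F) (hxV : xV ∈ V) (hxV' : xV' ∈ V') (hx : x = xV + xV') :
    rk Fq x ≤ rk Fq xV + rk Fq xV' ∧
    (IsElementary Fq V → IsElementary Fq V' → rk Fq xV ≤ rk Fq x) :=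
  stmt12_general n Fq F V V' hcompl x xV xV' hxV hxV' hx
end

section
/- Let C ⊆ GF(q^m)^n be an MRD code (possibly nonlinear) with n ≤ m, |C| = q^{mk}, and minimum rank distance d = n - k + 1. For any elementary linear subspace K of dimension k with elementary complement K', and any vector y ∈ K, there exists a unique codeword c ∈ C whose projection onto K along K' equals y. -/
/-!
Two distinct codewords are at rank distance at least `n - k + 1`, whereas a vector of the
elementary space `K'` has rank at most `dim K' = n - k`, since its coordinates lie in the
`GF(q)`-span of its coordinates in a `GF(q)`-rational basis. Hence the projection onto `K` along
`K'` is injective on `C`, and as `|C| = q ^ (m * k) = |K|` it is a bijection `C ≃ K`.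
-/

namespace Submodule

variable {R E : Type*} [Ring R] [AddCommGroup E] [Module R E] {p q : Submodule R E}

theorem projectionOnto_eq_iff_sub_mem (h : IsCompl p q) (x : E) {y : E} (hy : y ∈ p) :
    p.projectionOnto q h x = ⟨y, hy⟩ ↔ x - y ∈ q := by
  rw [← projectionOnto_apply_eq_zero_iff h, map_sub, projectionOnto_apply_of_mem_left h hy,
    sub_eq_zero]

theorem existsUnique_sub_mem_of_natCard_eq (h : IsCompl p q) [Finite p] {C : Set E}
    (hcard : Nat.card C = Nat.card p) (hC : ∀ c ∈ C, ∀ c' ∈ C, c - c' ∈ q → c = c')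
    {y : E} (hy : y ∈ p) : ∃! c, c ∈ C ∧ c - y ∈ q := by
  let f : C → p := fun c => p.projectionOnto q h c
  have hinj : Function.Injective f := fun c c' hcc' => Subtype.ext <|
    hC c c.2 c' c'.2 <| (projectionOnto_apply_eq_zero_iff h).1 <| by
      rw [map_sub, sub_eq_zero]; exact hcc'
  have hbij : Function.Bijective f :=
    (Nat.bijective_iff_injective_and_card f).2 ⟨hinj, hcard⟩
  obtain ⟨⟨c, hc⟩, hfc, huniq⟩ := hbij.existsUnique ⟨y, hy⟩
  refine ⟨c, ⟨hc, (projectionOnto_eq_iff_sub_mem h c hy).1 hfc⟩, ?_⟩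
  rintro c' ⟨hc', hc'y⟩
  exact congrArg Subtype.val (huniq ⟨c', hc'⟩ ((projectionOnto_eq_iff_sub_mem h c' hy).2 hc'y))

end Submodule

theorem IsElementary.rk_le_finrank {Fq F : Type*} [Field Fq] [Field F] [Algebra Fq F] {n : ℕ}
    {V : Submodule F (Fin n → F)} (hV : IsElementary Fq V) {x : Fin n → F} (hx : x ∈ V) :
    rk Fq x ≤ Module.finrank F V := by
  obtain ⟨b, hb⟩ := hV
  let a := fun i => b.repr ⟨x, hx⟩ i
  have hspan : Submodule.span Fq (Set.range x) ≤ Submodule.span Fq (Set.range a) := by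
    rw [Submodule.span_le]
    rintro _ ⟨j, rfl⟩
    have hxj : x j = ∑ i, a i * (b i : Fin n → F) j := by
      have := congrArg (fun v : V => (v : Fin n → F) j) (b.sum_repr ⟨x, hx⟩)
      simp only [Submodule.coe_sum, Submodule.coe_smul, Finset.sum_apply, Pi.smul_apply,
        smul_eq_mul] at this
      exact this.symm
    rw [SetLike.mem_coe, hxj]
    refine Submodule.sum_mem _ fun i _ => ?_
    obtain ⟨c, hc⟩ := hb i j
    rw [← hc, mul_comm, ← Algebra.smul_def]
    exact Submodule.smul_mem _ _ (Submodule.subset_span ⟨i, rfl⟩)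
  have : Module.Finite Fq (Submodule.span Fq (Set.range a)) :=
    FiniteDimensional.span_of_finite Fq (Set.finite_range a)
  calc rk Fq x ≤ Module.finrank Fq (Submodule.span Fq (Set.range a)) :=
        Submodule.finrank_mono hspan
    _ ≤ Module.finrank F V := by simpa [Set.finrank] using finrank_range_le_card (R := Fq) a

theorem stmt13_general (q m n k : ℕ) (Fq F : Type) [Field Fq] [Fintype Fq] [Field F] [Algebra Fq F]
    (hq : Fintype.card Fq = q) (hm : Module.finrank Fq F = m)
    (hk : 1 ≤ k) (hkn : k ≤ n) (hnm : n ≤ m)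
    (C : Set (Fin n → F)) (hcard : Nat.card C = q ^ (m * k))
    (hMRD : ∀ c ∈ C, ∀ c' ∈ C, c ≠ c' → n - k + 1 ≤ rk Fq (c - c'))
    (K K' : Submodule F (Fin n → F)) (hK' : IsElementary Fq K')
    (hdim : Module.finrank F K = k) (hcompl : IsCompl K K')
    (y : Fin n → F) (hy : y ∈ K) :
    ∃! c : Fin n → F, c ∈ C ∧ c - y ∈ K' := by
  have : Module.Finite Fq F := Module.finite_of_finrank_pos (by omega)
  have : Finite F := Module.finite_of_finite Fq
  have hdim' : Module.finrank F K' = n - k := by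
    have := Submodule.finrank_add_eq_of_isCompl hcompl
    rw [hdim, Module.finrank_fin_fun] at this
    omega
  have hcardK : Nat.card K = q ^ (m * k) := by
    rw [Module.natCard_eq_pow_finrank (K := F), Module.natCard_eq_pow_finrank (K := Fq),
      Nat.card_eq_fintype_card, hq, hm, hdim, pow_mul]
  refine Submodule.existsUnique_sub_mem_of_natCard_eq hcompl (hcard.trans hcardK.symm) ?_ hy
  intro c hc c' hc' hK'cc'
  by_contra hne
  have hrk_le := hK'.rk_le_finrank hK'cc'
  have hrk_ge := hMRD c hc c' hc' hne
  omega

/-- Basic combinatorial property of MRD codes: for any elementary linear subspace `K` of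
dimension `k` with elementary complement `K'`, and any `y ∈ K`, there is a unique codeword
whose projection onto `K` along `K'` is `y` (i.e. `c - y ∈ K'`). -/
theorem stmt13 (q m n k : ℕ) (Fq F : Type) [Field Fq] [Fintype Fq] [Field F] [Algebra Fq F]
    (hq : Fintype.card Fq = q) (hm : Module.finrank Fq F = m)
    (hk : 1 ≤ k) (hkn : k ≤ n) (hnm : n ≤ m)
    (C : Set (Fin n → F)) (hcard : Nat.card C = q ^ (m * k))
    (hMRD : ∀ c ∈ C, ∀ c' ∈ C, c ≠ c' → n - k + 1 ≤ rk Fq (c - c'))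
    (K K' : Submodule F (Fin n → F)) (hK : IsElementary Fq K) (hK' : IsElementary Fq K')
    (hdim : Module.finrank F K = k) (hcompl : IsCompl K K')
    (y : Fin n → F) (hy : y ∈ K) :
    ∃! c : Fin n → F, c ∈ C ∧ c - y ∈ K' :=
  stmt13_general q m n k Fq F hq hm hk hkn hnm C hcard hMRD K K' hK' hdim hcompl y hy
end
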